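/- arXiv:1508.06443 — 3 statements merged into one kernel-verified Lean document; each statement's English description precedes it below -/
import Mathlib

section
/- Let C_1 and C_2 be cycles in the full grid graph G that have more than one vertex in common, and let C_3 be the unique cycle consisting only of edges of C_1 and C_2 whose interior contains the interiors of both C_1 and C_2 and such that every edge of C_1 or C_2 belongs to C_3 or lies in its interior. If C_2 contains at least one edge lying in the exterior of C_1, then C_3 contains an edge of C_2 that lies in the exterior of C_1. -/
/-!
Common framework: tile ℝ² into closed unit squares indexed by `ℤ²`, with corners
forming a translate of `ℤ²` and the origin the centre of the square `S₀` (index `(0,0)`).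
A cycle is identified with its edge set (a set of unordered pairs of corners);
its interior (resp. exterior) is the union of the bounded (resp. unbounded)
connected components of the complement of the closed curve it traces in the plane.
-/

/-- Corners of the grid squares, indexed by `ℤ²`. -/
abbrev GridV := ℤ × ℤ

/-- Embedding of corners into the plane: the square of index `z` is
`[z₁ - 1/2, z₁ + 1/2] × [z₂ - 1/2, z₂ + 1/2]`, so the origin is the centre of `S₀`. -/
noncomputable def toPlane (v : GridV) : ℝ × ℝ := ((v.1 : ℝ) - 1 / 2, (v.2 : ℝ) - 1 / 2)

/-- The closed unit square of index `z`. -/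
def squareSet (z : GridV) : Set (ℝ × ℝ) :=
  Set.Icc ((z.1 : ℝ) - 1 / 2, (z.2 : ℝ) - 1 / 2) ((z.1 : ℝ) + 1 / 2, (z.2 : ℝ) + 1 / 2)

/-- The four edges (unit segments) of the square of index `z`, as unordered pairs of corners. -/
def squareEdges (z : GridV) : Set (Sym2 GridV) :=
  {s(z, z + (1, 0)), s(z + (1, 0), z + (1, 1)), s(z + (1, 1), z + (0, 1)), s(z + (0, 1), z)}

/-- Adjacency of corners in the full grid graph `G`: Euclidean distance one. -/
def GridAdj (u v : GridV) : Prop := |u.1 - v.1| + |u.2 - v.2| = 1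

/-- A cycle in the full grid graph: a cyclic sequence `(v₀, …, v_{n-1}, v₀)` of
distinct corners with consecutive corners adjacent. -/
structure GridCycle where
  n : ℕ
  hn : 3 ≤ n
  f : ZMod n → GridV
  inj : Function.Injective f
  adj : ∀ i, GridAdj (f i) (f (i + 1))

/-- The edge set of a grid cycle. -/
def GridCycle.edgeSet (C : GridCycle) : Set (Sym2 GridV) :=
  {e | ∃ i : ZMod C.n, e = s(C.f i, C.f (i + 1))}

/-- An edge set is (the edge set of) a cycle of the grid graph `G`.
We identify a cycle with its edge set. -/
def IsCycle (E : Set (Sym2 GridV)) : Prop := ∃ C : GridCycle, C.edgeSet = E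

/-- A cycle of the subgraph of the grid graph with edge set `G`. -/
def IsCycleIn (G E : Set (Sym2 GridV)) : Prop := IsCycle E ∧ E ⊆ G

/-- The vertices incident to some edge of `E`. -/
def vertexSetOf (E : Set (Sym2 GridV)) : Set GridV := {v | ∃ e ∈ E, v ∈ e}

/-- The closed segment in the plane realizing an edge. -/
noncomputable def edgeSeg : Sym2 GridV → Set (ℝ × ℝ) :=
  Sym2.lift ⟨fun a b => segment ℝ (toPlane a) (toPlane b), fun _ _ => segment_symm ℝ _ _⟩

/-- The closed curve in the plane traced by the edges of `E`. -/
noncomputable def carrierOf (E : Set (Sym2 GridV)) : Set (ℝ × ℝ) := ⋃ e ∈ E, edgeSeg e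

/-- The interior of a cycle: the union of the bounded connected components of the
complement of its carrier curve. -/
noncomputable def interiorOf (E : Set (Sym2 GridV)) : Set (ℝ × ℝ) :=
  {p | p ∉ carrierOf E ∧ Bornology.IsBounded (connectedComponentIn (carrierOf E)ᶜ p)}

/-- The exterior of a cycle: the union of the unbounded connected components of the
complement of its carrier curve. -/
noncomputable def exteriorOf (E : Set (Sym2 GridV)) : Set (ℝ × ℝ) :=
  {p | p ∉ carrierOf E ∧ ¬ Bornology.IsBounded (connectedComponentIn (carrierOf E)ᶜ p)}

/-- The set `A` is contained in the interior of the cycle `E` (points of the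
curve itself being allowed, so that e.g. a square whose boundary edges lie on the
cycle counts as contained in the interior). -/
def inInterior (E : Set (Sym2 GridV)) (A : Set (ℝ × ℝ)) : Prop :=
  A ⊆ interiorOf E ∪ carrierOf E

/-- The set `A` lies in the exterior of the cycle `E` (points of the curve itself
being allowed). -/
def inExterior (E : Set (Sym2 GridV)) (A : Set (ℝ × ℝ)) : Prop :=
  A ⊆ exteriorOf E ∪ carrierOf E

/-- Star adjacency: distinct squares sharing at least a corner. -/
def starAdj (z w : GridV) : Prop := z ≠ w ∧ |z.1 - w.1| ≤ 1 ∧ |z.2 - w.2| ≤ 1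

/-- Plus adjacency: squares sharing an edge. -/
def plusAdj (z w : GridV) : Prop := |z.1 - w.1| + |z.2 - w.2| = 1

/-- The star-connected occupied component `C(0)` of the square `S₀` (of index `(0,0)`),
for the occupancy configuration `ω`; empty if `S₀` is vacant. -/
def starComp (ω : GridV → Prop) : Set GridV :=
  {z | ω z ∧ Relation.ReflTransGen (fun a b => ω a ∧ ω b ∧ starAdj a b) (0, 0) z}

/-- The plus-connected occupied component `C⁺(0)` of the square `S₀`. -/
def plusComp (ω : GridV → Prop) : Set GridV :=
  {z | ω z ∧ Relation.ReflTransGen (fun a b => ω a ∧ ω b ∧ plusAdj a b) (0, 0) z}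

/-- The edge set of the graph `G_C`: all edges of squares of `C(0)`. -/
def gcEdges (ω : GridV → Prop) : Set (Sym2 GridV) := ⋃ z ∈ starComp ω, squareEdges z

/-- The edge set of the graph `G⁺_C`: all edges of squares of `C⁺(0)`. -/
def gpcEdges (ω : GridV → Prop) : Set (Sym2 GridV) := ⋃ z ∈ plusComp ω, squareEdges z

/-- `e` is an outermost boundary edge of the graph with edge set `G`: for every
cycle `E` in this graph, either `e` is an edge of `E` or `e` lies in the exterior of `E`. -/
def outermostBoundaryEdgeIn (G : Set (Sym2 GridV)) (e : Sym2 GridV) : Prop :=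
  e ∈ G ∧ ∀ E, IsCycleIn G E → e ∈ E ∨ inExterior E (edgeSeg e)

/-- The subgraph spanned by the edge set `E` is connected: any two incident vertices
are joined by a walk using only edges of `E`. -/
def EdgeSetConnected (E : Set (Sym2 GridV)) : Prop :=
  ∀ u v, u ∈ vertexSetOf E → v ∈ vertexSetOf E →
    ∃ p : List GridV, p.head? = some u ∧ p.getLast? = some v ∧
      List.Chain' (fun a b => s(a, b) ∈ E) p

/-- `D` is the outermost boundary cycle `D_k` of the square of index `z` of the star
component `C(0)`: (a) the square lies in the interior of `D`; (b) every edge of `D` is a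
boundary edge adjacent to an occupied square of `C(0)` in the interior of `D` and to a
vacant square in the exterior of `D`; (c) every cycle of `G_C` containing the square in
its interior has all its edges on `D` or in the interior of `D`. -/
def isOutermostCycleOf (ω : GridV → Prop) (z : GridV) (D : Set (Sym2 GridV)) : Prop :=
  IsCycleIn (gcEdges ω) D ∧
  inInterior D (squareSet z) ∧
  (∀ e ∈ D,
    (∃ w ∈ starComp ω, e ∈ squareEdges w ∧ inInterior D (squareSet w)) ∧
    (∃ w, ¬ ω w ∧ e ∈ squareEdges w ∧ inExterior D (squareSet w))) ∧
  (∀ C, IsCycleIn (gcEdges ω) C → inInterior C (squareSet z) →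
    ∀ e ∈ C, e ∈ D ∨ inInterior D (edgeSeg e))

/-- The list of edges traversed by a walk given as a list of vertices. -/
def walkEdges (p : List GridV) : List (Sym2 GridV) :=
  List.zipWith (fun a b => s(a, b)) p p.tail


/-!
Let `e` be an edge of `C₂` in the exterior of `C₁`; if `e ∉ C₃`, its midpoint `m` lies in
the exterior of `C₁` and in the interior of `C₃`. The component of `m` in the complement of
`C₁` is unbounded, so it cannot lie in the bounded component of `m` in the complement of `C₃`:
the curve `C₃` meets the exterior of `C₁`, along an edge that is not in `C₁` and is therefore
in `C₂`. Distinct grid edges meet only at corners, so the open part of that edge avoids `C₁`,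
and the whole edge lies in the exterior of `C₁`.
-/

open Set

noncomputable def openEdgeSeg : Sym2 GridV → Set (ℝ × ℝ) :=
  Sym2.lift
    ⟨fun a b => openSegment ℝ (toPlane a) (toPlane b), fun _ _ => openSegment_symm ℝ _ _⟩

lemma closure_openEdgeSeg (e : Sym2 GridV) : closure (openEdgeSeg e) = edgeSeg e := by
  induction e using Sym2.ind
  exact closure_openSegment _ _

lemma openEdgeSeg_subset_edgeSeg (e : Sym2 GridV) : openEdgeSeg e ⊆ edgeSeg e :=
  closure_openEdgeSeg e ▸ subset_closure

lemma isPreconnected_openEdgeSeg (e : Sym2 GridV) : IsPreconnected (openEdgeSeg e) := by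
  induction e using Sym2.ind
  exact (convex_openSegment _ _).isPreconnected

lemma GridAdj.exists_eq_right_or_up {a b : GridV} (h : GridAdj a b) :
    ∃ c : GridV, s(a, b) = s(c, c + (1, 0)) ∨ s(a, b) = s(c, c + (0, 1)) := by
  unfold GridAdj at h
  rw [Int.abs_eq_natAbs, Int.abs_eq_natAbs] at h
  have : b = a + (1, 0) ∨ a = b + (1, 0) ∨ b = a + (0, 1) ∨ a = b + (0, 1) := by
    simp only [Prod.ext_iff, Prod.fst_add, Prod.snd_add]
    omega
  rcases this with rfl | rfl | rfl | rfl
  · exact ⟨a, .inl rfl⟩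
  · exact ⟨b, .inl Sym2.eq_swap⟩
  · exact ⟨a, .inr rfl⟩
  · exact ⟨b, .inr Sym2.eq_swap⟩

section Coordinates

variable (c : GridV)

lemma toPlane_add_right : toPlane (c + (1, 0)) = ((c.1 : ℝ) + 1 / 2, (c.2 : ℝ) - 1 / 2) := by
  simp only [toPlane, Prod.fst_add, Prod.snd_add]; push_cast; ring_nf

lemma toPlane_add_up : toPlane (c + (0, 1)) = ((c.1 : ℝ) - 1 / 2, (c.2 : ℝ) + 1 / 2) := by
  simp only [toPlane, Prod.fst_add, Prod.snd_add]; push_cast; ring_nf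

lemma edgeSeg_right : edgeSeg s(c, c + (1, 0)) =
    (·, (c.2 : ℝ) - 1 / 2) '' Icc ((c.1 : ℝ) - 1 / 2) (c.1 + 1 / 2) := by
  change segment ℝ _ _ = _
  rw [toPlane_add_right, toPlane, ← Prod.image_mk_segment_left, segment_eq_Icc (by linarith)]

lemma edgeSeg_up : edgeSeg s(c, c + (0, 1)) =
    ((c.1 : ℝ) - 1 / 2, ·) '' Icc ((c.2 : ℝ) - 1 / 2) (c.2 + 1 / 2) := by
  change segment ℝ _ _ = _
  rw [toPlane_add_up, toPlane, ← Prod.image_mk_segment_right, segment_eq_Icc (by linarith)]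

lemma openEdgeSeg_right : openEdgeSeg s(c, c + (1, 0)) =
    (·, (c.2 : ℝ) - 1 / 2) '' Ioo ((c.1 : ℝ) - 1 / 2) (c.1 + 1 / 2) := by
  change openSegment ℝ _ _ = _
  rw [toPlane_add_right, toPlane, ← Prod.image_mk_openSegment_left,
    openSegment_eq_Ioo (by linarith)]

lemma openEdgeSeg_up : openEdgeSeg s(c, c + (0, 1)) =
    ((c.1 : ℝ) - 1 / 2, ·) '' Ioo ((c.2 : ℝ) - 1 / 2) (c.2 + 1 / 2) := by
  change openSegment ℝ _ _ = _
  rw [toPlane_add_up, toPlane, ← Prod.image_mk_openSegment_right,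
    openSegment_eq_Ioo (by linarith)]

end Coordinates

lemma Int.eq_of_cast_sub_one_lt {m n : ℤ} (h₁ : (m : ℝ) - 1 < n) (h₂ : (n : ℝ) < m + 1) :
    m = n := by
  have : m - 1 < n := by exact_mod_cast h₁
  have : n < m + 1 := by exact_mod_cast h₂
  omega

lemma disjoint_openEdgeSeg_edgeSeg {a b c d : GridV} (hab : GridAdj a b) (hcd : GridAdj c d)
    (hne : s(a, b) ≠ s(c, d)) : Disjoint (openEdgeSeg s(a, b)) (edgeSeg s(c, d)) := by
  obtain ⟨a, ha | ha⟩ := hab.exists_eq_right_or_up <;>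
    obtain ⟨c, hc | hc⟩ := hcd.exists_eq_right_or_up <;>
    rw [ha, hc] at hne ⊢ <;>
    simp only [openEdgeSeg_right, openEdgeSeg_up, edgeSeg_right, edgeSeg_up, disjoint_left,
      mem_image, mem_Ioo, mem_Icc, not_exists, not_and] <;>
    rintro _ ⟨x, ⟨hx₁, hx₂⟩, rfl⟩ y ⟨hy₁, hy₂⟩ hyx <;>
    obtain ⟨h₁, h₂⟩ := Prod.ext_iff.mp hyx <;> dsimp only at h₁ h₂
  · have h₂ : c.2 = a.2 := by exact_mod_cast (by linarith : (c.2 : ℝ) = a.2)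
    have h₁ : c.1 = a.1 := Int.eq_of_cast_sub_one_lt (by linarith) (by linarith)
    exact hne (by rw [Prod.ext h₁ h₂])
  · have h : a.1 = c.1 := Int.eq_of_cast_sub_one_lt (by linarith) (by linarith)
    rw [h] at hx₁; linarith
  · have h : a.2 = c.2 := Int.eq_of_cast_sub_one_lt (by linarith) (by linarith)
    rw [h] at hx₁; linarith
  · have h₁ : c.1 = a.1 := by exact_mod_cast (by linarith : (c.1 : ℝ) = a.1)
    have h₂ : c.2 = a.2 := Int.eq_of_cast_sub_one_lt (by linarith) (by linarith)
    exact hne (by rw [Prod.ext h₁ h₂])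

lemma IsCycle.exists_gridAdj {C : Set (Sym2 GridV)} (hC : IsCycle C) {e : Sym2 GridV}
    (he : e ∈ C) : ∃ a b, GridAdj a b ∧ e = s(a, b) := by
  obtain ⟨G, rfl⟩ := hC
  obtain ⟨i, rfl⟩ := he
  exact ⟨_, _, G.adj i, rfl⟩

section EdgeOffCycle

variable {C : Set (Sym2 GridV)} {a b : GridV}

lemma IsCycle.disjoint_openEdgeSeg_carrierOf (hC : IsCycle C) (hab : GridAdj a b)
    (he : s(a, b) ∉ C) : Disjoint (openEdgeSeg s(a, b)) (carrierOf C) := by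
  simp only [carrierOf, disjoint_iUnion_right]
  intro f hf
  obtain ⟨c, d, hcd, rfl⟩ := hC.exists_gridAdj hf
  exact disjoint_openEdgeSeg_edgeSeg hab hcd (ne_of_mem_of_not_mem hf he).symm

lemma IsCycle.isPreconnected_edgeSeg_diff_carrierOf (hC : IsCycle C) (hab : GridAdj a b)
    (he : s(a, b) ∉ C) : IsPreconnected (edgeSeg s(a, b) \ carrierOf C) :=
  (isPreconnected_openEdgeSeg _).subset_closure
    (subset_sdiff.2 ⟨openEdgeSeg_subset_edgeSeg _, hC.disjoint_openEdgeSeg_carrierOf hab he⟩)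
    (closure_openEdgeSeg _ ▸ sdiff_subset)

end EdgeOffCycle

lemma IsPreconnected.mem_exteriorOf {E : Set (Sym2 GridV)} {s : Set (ℝ × ℝ)} {p q : ℝ × ℝ}
    (hs : IsPreconnected s) (hsE : Disjoint s (carrierOf E)) (hp : p ∈ s) (hq : q ∈ s)
    (hpE : p ∈ exteriorOf E) : q ∈ exteriorOf E := by
  have hsub := hs.subset_connectedComponentIn hp (subset_compl_iff_disjoint_right.2 hsE)
  refine ⟨disjoint_left.1 hsE hq, ?_⟩
  rw [← connectedComponentIn_eq (hsub hq)]
  exact hpE.2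

lemma IsCycle.inExterior_edgeSeg {C : Set (Sym2 GridV)} {a b : GridV} (hC : IsCycle C)
    (hab : GridAdj a b) (he : s(a, b) ∉ C) {q : ℝ × ℝ} (hq : q ∈ edgeSeg s(a, b))
    (hqC : q ∈ exteriorOf C) : inExterior C (edgeSeg s(a, b)) := by
  intro x hx
  by_cases hxC : x ∈ carrierOf C
  · exact .inr hxC
  exact .inl <| (hC.isPreconnected_edgeSeg_diff_carrierOf hab he).mem_exteriorOf
    disjoint_sdiff_left ⟨hq, hqC.1⟩ ⟨hx, hxC⟩ hqC

lemma exists_mem_carrierOf_mem_exteriorOf {E F : Set (Sym2 GridV)} {m : ℝ × ℝ}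
    (hE : m ∈ exteriorOf E) (hF : m ∈ interiorOf F) :
    ∃ q ∈ carrierOf F, q ∈ exteriorOf E := by
  by_contra! h
  have hm := mem_connectedComponentIn (F := (carrierOf E)ᶜ) hE.1
  have hK : Disjoint (connectedComponentIn (carrierOf E)ᶜ m) (carrierOf F) :=
    disjoint_left.2 fun q hqK hqF => h q hqF <|
      isPreconnected_connectedComponentIn.mem_exteriorOf
        (disjoint_compl_left.mono_left (connectedComponentIn_subset _ _)) hm hqK hE
  exact hE.2 <| hF.2.subset <| isPreconnected_connectedComponentIn.subset_connectedComponentIn hm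
    (subset_compl_iff_disjoint_right.2 hK)

theorem merge_cycles_exterior_edge_general (C₁ C₂ C₃ : Set (Sym2 GridV))
    (h₁ : IsCycle C₁) (h₂ : IsCycle C₂)
    (h₃ : IsCycle C₃) (h₃sub : C₃ ⊆ C₁ ∪ C₂)
    (h₃cov : ∀ e ∈ C₁ ∪ C₂, e ∈ C₃ ∨ inInterior C₃ (edgeSeg e))
    (hext : ∃ e ∈ C₂, e ∉ C₁ ∧ inExterior C₁ (edgeSeg e)) :
    ∃ e ∈ C₃, e ∈ C₂ ∧ e ∉ C₁ ∧ inExterior C₁ (edgeSeg e) := by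
  obtain ⟨e, he₂, he₁, he_ext⟩ := hext
  obtain ⟨a, b, hab, rfl⟩ := h₂.exists_gridAdj he₂
  by_cases he₃ : s(a, b) ∈ C₃
  · exact ⟨_, he₃, he₂, he₁, he_ext⟩
  obtain ⟨m, hm⟩ : (openEdgeSeg s(a, b)).Nonempty :=
    ⟨_, midpoint_mem_openSegment (𝕜 := ℝ) _ _⟩
  have hm_seg := openEdgeSeg_subset_edgeSeg _ hm
  have hm₁ : m ∈ exteriorOf C₁ := (he_ext hm_seg).resolve_right
    (disjoint_left.1 (h₁.disjoint_openEdgeSeg_carrierOf hab he₁) hm)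
  have hm₃ : m ∈ interiorOf C₃ :=
    ((h₃cov _ (.inr he₂)).resolve_left he₃ hm_seg).resolve_right
      (disjoint_left.1 (h₃.disjoint_openEdgeSeg_carrierOf hab he₃) hm)
  obtain ⟨q, hq₃, hq₁⟩ := exists_mem_carrierOf_mem_exteriorOf hm₁ hm₃
  obtain ⟨f, hf₃, hqf⟩ := mem_iUnion₂.1 hq₃
  have hf₁ : f ∉ C₁ := fun hf₁ => hq₁.1 (mem_iUnion₂.2 ⟨f, hf₁, hqf⟩)
  obtain ⟨u, v, huv, rfl⟩ := h₃.exists_gridAdj hf₃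
  exact ⟨_, hf₃, (h₃sub hf₃).resolve_left hf₁, hf₁,
    h₁.inExterior_edgeSeg huv hf₁ hqf hq₁⟩

/-- Let `C₁, C₂` be cycles of the grid graph with more than one common
vertex and let `C₃` be the cycle consisting of edges of `C₁` and `C₂` whose interior
contains the interiors of both, every edge of `C₁` or `C₂` lying on `C₃` or in its
interior. If `C₂` has an edge lying in the exterior of `C₁`, then `C₃` contains an edge
of `C₂` lying in the exterior of `C₁`. -/
theorem merge_cycles_exterior_edge (C₁ C₂ C₃ : Set (Sym2 GridV))
    (h₁ : IsCycle C₁) (h₂ : IsCycle C₂)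
    (hcommon : ¬ (vertexSetOf C₁ ∩ vertexSetOf C₂).Subsingleton)
    (h₃ : IsCycle C₃) (h₃sub : C₃ ⊆ C₁ ∪ C₂)
    (h₃int₁ : interiorOf C₁ ⊆ interiorOf C₃) (h₃int₂ : interiorOf C₂ ⊆ interiorOf C₃)
    (h₃cov : ∀ e ∈ C₁ ∪ C₂, e ∈ C₃ ∨ inInterior C₃ (edgeSeg e))
    (hext : ∃ e ∈ C₂, e ∉ C₁ ∧ inExterior C₁ (edgeSeg e)) :
    ∃ e ∈ C₃, e ∈ C₂ ∧ e ∉ C₁ ∧ inExterior C₁ (edgeSeg e) :=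
  merge_cycles_exterior_edge_general C₁ C₂ C₃ h₁ h₂ h₃ h₃sub h₃cov hext
end

section
/- Let C_1 and C_2 be cycles in the full grid graph G. Suppose D and D' are two cycles, each consisting only of edges of C_1 and C_2, such that every edge of C_1 and every edge of C_2 either belongs to D or is contained in the interior of D, and likewise every edge of C_1 and every edge of C_2 either belongs to D' or is contained in the interior of D'. Then D = D'. -/
/-!
Suppose an edge `e` of `D` is not an edge of `D'`. Then `e` lies inside `D'`, and the segment
joining the centres of the two squares on either side of `e` crosses the grid only at `e`, so
both centres lie in one bounded component of the complement of `D'`. Every edge of `D'` lies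
on `D` or inside `D`, hence so does the interior of `D'`, and both centres lie inside `D`.
This is impossible: the squares whose centres lie in the components of these two centres form
a finite nonempty set whose boundary is contained in `D` and has even degree at every vertex,
so it is all of `D` (a cycle has no proper nonempty even subgraph); yet `e` is not a boundary
edge of that set, since the squares on both its sides belong to it.
-/

noncomputable def squareCenter (z : GridV) : ℝ × ℝ := ((z.1 : ℝ), (z.2 : ℝ))

def topEdge (z : GridV) : Sym2 GridV := s(z + (0, 1), z + (1, 1))

def rightEdge (z : GridV) : Sym2 GridV := s(z + (1, 0), z + (1, 1))

def IsSharedEdge (e : Sym2 GridV) (a b : GridV) : Prop :=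
  (b = a + (0, 1) ∧ e = topEdge a) ∨ (b = a + (1, 0) ∧ e = rightEdge a)

lemma intCast_ne_add_half (m n : ℤ) : (m : ℝ) ≠ n + 1 / 2 := by
  intro h
  have : ((2 * m : ℤ) : ℝ) = ((2 * n + 1 : ℤ) : ℝ) := by push_cast; linarith
  have := Int.cast_injective this
  omega

lemma eq_of_sub_half_le_of_le_add_half {m n : ℤ} (h₁ : (n : ℝ) - 1 / 2 ≤ m)
    (h₂ : (m : ℝ) ≤ n + 1 / 2) : m = n := by
  have h₃ : m < n + 1 := by exact_mod_cast (by linarith : (m : ℝ) < n + 1)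
  have h₄ : n < m + 1 := by exact_mod_cast (by linarith : (n : ℝ) < m + 1)
  omega

lemma mem_segment_of_snd_eq {x₁ x₂ y : ℝ} (h : x₁ ≤ x₂) {q : ℝ × ℝ} :
    q ∈ segment ℝ (x₁, y) (x₂, y) ↔ q.2 = y ∧ x₁ ≤ q.1 ∧ q.1 ≤ x₂ := by
  rw [← Prod.image_mk_segment_left, segment_eq_Icc h]
  constructor
  · rintro ⟨x, ⟨hx₁, hx₂⟩, rfl⟩
    exact ⟨rfl, hx₁, hx₂⟩
  · rintro ⟨hy, hx⟩
    exact ⟨q.1, hx, Prod.ext rfl hy.symm⟩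

lemma mem_segment_of_fst_eq {x y₁ y₂ : ℝ} (h : y₁ ≤ y₂) {q : ℝ × ℝ} :
    q ∈ segment ℝ (x, y₁) (x, y₂) ↔ q.1 = x ∧ y₁ ≤ q.2 ∧ q.2 ≤ y₂ := by
  rw [← Prod.image_mk_segment_right, segment_eq_Icc h]
  constructor
  · rintro ⟨y, ⟨hy₁, hy₂⟩, rfl⟩
    exact ⟨rfl, hy₁, hy₂⟩
  · rintro ⟨hx, hy⟩
    exact ⟨q.2, hy, Prod.ext hx.symm rfl⟩

lemma mem_edgeSeg_topEdge {z : GridV} {q : ℝ × ℝ} :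
    q ∈ edgeSeg (topEdge z) ↔ q.2 = z.2 + 1 / 2 ∧ z.1 - 1 / 2 ≤ q.1 ∧ q.1 ≤ z.1 + 1 / 2 := by
  have h : edgeSeg (topEdge z) =
      segment ℝ ((z.1 : ℝ) - 1 / 2, (z.2 : ℝ) + 1 / 2) ((z.1 : ℝ) + 1 / 2, (z.2 : ℝ) + 1 / 2) := by
    simp only [topEdge, edgeSeg, Sym2.lift_mk, toPlane, Prod.fst_add, Prod.snd_add]
    push_cast
    ring_nf
  rw [h, mem_segment_of_snd_eq (by linarith)]

lemma mem_edgeSeg_rightEdge {z : GridV} {q : ℝ × ℝ} :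
    q ∈ edgeSeg (rightEdge z) ↔ q.1 = z.1 + 1 / 2 ∧ z.2 - 1 / 2 ≤ q.2 ∧ q.2 ≤ z.2 + 1 / 2 := by
  have h : edgeSeg (rightEdge z) =
      segment ℝ ((z.1 : ℝ) + 1 / 2, (z.2 : ℝ) - 1 / 2) ((z.1 : ℝ) + 1 / 2, (z.2 : ℝ) + 1 / 2) := by
    simp only [rightEdge, edgeSeg, Sym2.lift_mk, toPlane, Prod.fst_add, Prod.snd_add]
    push_cast
    ring_nf
  rw [h, mem_segment_of_fst_eq (by linarith)]

lemma mem_segment_squareCenter_up {a : GridV} {q : ℝ × ℝ} :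
    q ∈ segment ℝ (squareCenter a) (squareCenter (a + (0, 1))) ↔
      q.1 = a.1 ∧ a.2 ≤ q.2 ∧ q.2 ≤ a.2 + 1 := by
  have h : squareCenter (a + (0, 1)) = ((a.1 : ℝ), (a.2 : ℝ) + 1) := by
    simp [squareCenter]
  rw [h, squareCenter, mem_segment_of_fst_eq (by linarith)]

lemma mem_segment_squareCenter_right {a : GridV} {q : ℝ × ℝ} :
    q ∈ segment ℝ (squareCenter a) (squareCenter (a + (1, 0))) ↔
      q.2 = a.2 ∧ a.1 ≤ q.1 ∧ q.1 ≤ a.1 + 1 := by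
  have h : squareCenter (a + (1, 0)) = ((a.1 : ℝ) + 1, (a.2 : ℝ)) := by
    simp [squareCenter]
  rw [h, squareCenter, mem_segment_of_snd_eq (by linarith)]

namespace IsSharedEdge

variable {e f : Sym2 GridV} {a b c d : GridV}

lemma unique (h : IsSharedEdge e a b) (h' : IsSharedEdge e c d) : a = c ∧ b = d := by
  rcases h with ⟨rfl, rfl⟩ | ⟨rfl, rfl⟩ <;> rcases h' with ⟨rfl, h⟩ | ⟨rfl, h⟩ <;>
    simp only [topEdge, rightEdge, Sym2.eq_iff, Prod.ext_iff, Prod.fst_add, Prod.snd_add] at h <;>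
    simp only [Prod.ext_iff, Prod.fst_add, Prod.snd_add] <;> omega

lemma eq_of_mem_segment (h : IsSharedEdge e a b) (h' : IsSharedEdge f c d) {q : ℝ × ℝ}
    (hq : q ∈ segment ℝ (squareCenter a) (squareCenter b)) (hqf : q ∈ edgeSeg f) : f = e := by
  rcases h with ⟨rfl, rfl⟩ | ⟨rfl, rfl⟩ <;> rcases h' with ⟨rfl, rfl⟩ | ⟨rfl, rfl⟩
  · rw [mem_segment_squareCenter_up] at hq
    rw [mem_edgeSeg_topEdge] at hqf
    have h₁ := eq_of_sub_half_le_of_le_add_half (m := a.1) (n := c.1) (by linarith) (by linarith)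
    have h₂ := eq_of_sub_half_le_of_le_add_half (m := c.2) (n := a.2) (by linarith) (by linarith)
    rw [show c = a from Prod.ext h₁.symm h₂]
  · rw [mem_segment_squareCenter_up] at hq
    rw [mem_edgeSeg_rightEdge] at hqf
    exact absurd (hq.1.symm.trans hqf.1) (intCast_ne_add_half _ _)
  · rw [mem_segment_squareCenter_right] at hq
    rw [mem_edgeSeg_topEdge] at hqf
    exact absurd (hq.1.symm.trans hqf.1) (intCast_ne_add_half _ _)
  · rw [mem_segment_squareCenter_right] at hq
    rw [mem_edgeSeg_rightEdge] at hqf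
    have h₁ := eq_of_sub_half_le_of_le_add_half (m := c.1) (n := a.1) (by linarith) (by linarith)
    have h₂ := eq_of_sub_half_le_of_le_add_half (m := a.2) (n := c.2) (by linarith) (by linarith)
    rw [show c = a from Prod.ext h₁ h₂.symm]

lemma midpoint_mem_segment_inter_edgeSeg (h : IsSharedEdge e a b) :
    midpoint ℝ (squareCenter a) (squareCenter b) ∈
      segment ℝ (squareCenter a) (squareCenter b) ∩ edgeSeg e := by
  refine ⟨midpoint_mem_segment _ _, ?_⟩
  rcases h with ⟨rfl, rfl⟩ | ⟨rfl, rfl⟩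
  · rw [mem_edgeSeg_topEdge]
    simp only [midpoint_eq_smul_add, invOf_eq_inv, squareCenter, Prod.smul_mk, Prod.mk_add_mk,
      Prod.fst_add, Prod.snd_add, Int.cast_add, Int.cast_one, add_zero, smul_eq_mul]
    refine ⟨?_, ?_, ?_⟩ <;> linarith
  · rw [mem_edgeSeg_rightEdge]
    simp only [midpoint_eq_smul_add, invOf_eq_inv, squareCenter, Prod.smul_mk, Prod.mk_add_mk,
      Prod.fst_add, Prod.snd_add, Int.cast_add, Int.cast_one, add_zero, smul_eq_mul]
    refine ⟨?_, ?_, ?_⟩ <;> linarith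

lemma squareCenter_notMem_edgeSeg (h : IsSharedEdge e a b) (z : GridV) :
    squareCenter z ∉ edgeSeg e := by
  rcases h with ⟨rfl, rfl⟩ | ⟨rfl, rfl⟩
  · rw [mem_edgeSeg_topEdge]
    exact fun h => intCast_ne_add_half _ _ h.1
  · rw [mem_edgeSeg_rightEdge]
    exact fun h => intCast_ne_add_half _ _ h.1

end IsSharedEdge

lemma GridAdj.symm {u v : GridV} (h : GridAdj u v) : GridAdj v u := by
  rwa [GridAdj, abs_sub_comm, abs_sub_comm v.2]

lemma isSharedEdge_right (v : GridV) : IsSharedEdge s(v, v + (1, 0)) (v - (0, 1)) v := by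
  left
  simp only [topEdge, Sym2.eq_iff, Prod.ext_iff, Prod.fst_add, Prod.snd_add, Prod.fst_sub,
    Prod.snd_sub]
  omega

lemma isSharedEdge_left (v : GridV) :
    IsSharedEdge s(v, v + (-1, 0)) (v - (1, 1)) (v - (1, 0)) := by
  left
  simp only [topEdge, Sym2.eq_iff, Prod.ext_iff, Prod.fst_add, Prod.snd_add, Prod.fst_sub,
    Prod.snd_sub]
  omega

lemma isSharedEdge_up (v : GridV) : IsSharedEdge s(v, v + (0, 1)) (v - (1, 0)) v := by
  right
  simp only [rightEdge, Sym2.eq_iff, Prod.ext_iff, Prod.fst_add, Prod.snd_add, Prod.fst_sub,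
    Prod.snd_sub]
  omega

lemma isSharedEdge_down (v : GridV) :
    IsSharedEdge s(v, v + (0, -1)) (v - (1, 1)) (v - (0, 1)) := by
  right
  simp only [rightEdge, Sym2.eq_iff, Prod.ext_iff, Prod.fst_add, Prod.snd_add, Prod.fst_sub,
    Prod.snd_sub]
  omega

def unitSteps : Finset GridV := {(1, 0), (-1, 0), (0, 1), (0, -1)}

lemma GridAdj.sub_mem_unitSteps {u v : GridV} (h : GridAdj u v) : v - u ∈ unitSteps := by
  obtain ⟨u₁, u₂⟩ := u
  obtain ⟨v₁, v₂⟩ := v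
  simp only [GridAdj] at h
  simp only [unitSteps, Finset.mem_insert, Finset.mem_singleton, Prod.mk_sub_mk, Prod.mk.injEq]
  rcases abs_cases (u₁ - v₁) with h₁ | h₁ <;> rcases abs_cases (u₂ - v₂) with h₂ | h₂ <;>
    omega

lemma GridAdj.exists_isSharedEdge {u v : GridV} (h : GridAdj u v) :
    ∃ a b, IsSharedEdge s(u, v) a b := by
  have hv : v = u + (v - u) := (add_sub_cancel u v).symm
  have hd := h.sub_mem_unitSteps
  simp only [unitSteps, Finset.mem_insert, Finset.mem_singleton] at hd
  rcases hd with hd | hd | hd | hd <;> rw [hv, hd]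
  exacts [⟨_, _, isSharedEdge_right u⟩, ⟨_, _, isSharedEdge_left u⟩, ⟨_, _, isSharedEdge_up u⟩,
    ⟨_, _, isSharedEdge_down u⟩]

def IsGridEdgeSet (E : Set (Sym2 GridV)) : Prop := ∀ e ∈ E, ∃ a b, IsSharedEdge e a b

lemma mem_carrierOf {E : Set (Sym2 GridV)} {q : ℝ × ℝ} :
    q ∈ carrierOf E ↔ ∃ e ∈ E, q ∈ edgeSeg e := by
  simp [carrierOf]

lemma squareCenter_notMem_carrierOf {E : Set (Sym2 GridV)} (hE : IsGridEdgeSet E) (z : GridV) :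
    squareCenter z ∉ carrierOf E := by
  rintro hz
  obtain ⟨f, hf, hzf⟩ := mem_carrierOf.1 hz
  obtain ⟨c, d, hcd⟩ := hE f hf
  exact hcd.squareCenter_notMem_edgeSeg z hzf

lemma IsSharedEdge.segment_subset_compl_carrierOf {E : Set (Sym2 GridV)} {e : Sym2 GridV}
    {a b : GridV} (hE : IsGridEdgeSet E) (h : IsSharedEdge e a b) (he : e ∉ E) :
    segment ℝ (squareCenter a) (squareCenter b) ⊆ (carrierOf E)ᶜ := by
  intro q hq hqE
  obtain ⟨f, hf, hqf⟩ := mem_carrierOf.1 hqE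
  obtain ⟨c, d, hcd⟩ := hE f hf
  exact he (h.eq_of_mem_segment hcd hq hqf ▸ hf)

noncomputable def degParity (B : Set (Sym2 GridV)) (v : GridV) : ZMod 2 :=
  ∑ d ∈ unitSteps, B.indicator 1 s(v, v + d)

namespace GridCycle

variable (C : GridCycle)

instance : NeZero C.n := ⟨by have := C.hn; omega⟩

lemma isGridEdgeSet : IsGridEdgeSet C.edgeSet := by
  rintro _ ⟨i, rfl⟩
  exact (C.adj i).exists_isSharedEdge

lemma eq_or_eq_of_mem_edgeSet {e : Sym2 GridV} (he : e ∈ C.edgeSet) {i : ZMod C.n}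
    (hi : C.f i ∈ e) : e = s(C.f (i - 1), C.f i) ∨ e = s(C.f i, C.f (i + 1)) := by
  obtain ⟨j, rfl⟩ := he
  rcases Sym2.mem_iff.1 hi with hj | hj
  · rw [C.inj hj]
    exact Or.inr rfl
  · rw [← C.inj hj, eq_sub_of_add_eq (C.inj hj).symm]
    exact Or.inl rfl

lemma f_sub_one_ne_f_add_one (i : ZMod C.n) : C.f (i - 1) ≠ C.f (i + 1) := by
  intro h
  have h₂ : ((2 : ℕ) : ZMod C.n) = 0 := by
    have := C.inj h
    push_cast
    linear_combination -this
  have := Nat.le_of_dvd two_pos ((ZMod.natCast_eq_zero_iff 2 C.n).1 h₂)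
  have := C.hn
  omega

lemma degParity_of_subset {B : Set (Sym2 GridV)} (hB : B ⊆ C.edgeSet) (i : ZMod C.n) :
    degParity B (C.f i) =
      B.indicator 1 s(C.f (i - 1), C.f i) + B.indicator 1 s(C.f i, C.f (i + 1)) := by
  set v := C.f i
  have hprev : GridAdj v (C.f (i - 1)) := by simpa using (C.adj (i - 1)).symm
  have hne : C.f (i - 1) - v ≠ C.f (i + 1) - v := fun h =>
    C.f_sub_one_ne_f_add_one i (by simpa using h)
  rw [degParity, Finset.sum_eq_add_of_mem _ _ hprev.sub_mem_unitSteps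
    (C.adj i).sub_mem_unitSteps hne, add_sub_cancel, add_sub_cancel, Sym2.eq_swap]
  rintro d - ⟨hd₁, hd₂⟩
  refine Set.indicator_of_notMem (fun hd => ?_) _
  rcases C.eq_or_eq_of_mem_edgeSet (hB hd) (Sym2.mem_mk_left _ _) with h | h
  · rw [show s(C.f (i - 1), v) = s(v, C.f (i - 1)) from Sym2.eq_swap, Sym2.congr_right] at h
    exact hd₁ (by rw [← h]; abel)
  · rw [Sym2.congr_right] at h
    exact hd₂ (by rw [← h]; abel)

lemma eq_edgeSet_of_degParity_eq_zero {B : Set (Sym2 GridV)} (hB : B ⊆ C.edgeSet)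
    (hB₀ : ∀ v, degParity B v = 0) (hne : B.Nonempty) : B = C.edgeSet := by
  have hstep : ∀ i, s(C.f i, C.f (i + 1)) ∈ B → s(C.f (i + 1), C.f (i + 1 + 1)) ∈ B := by
    intro i hi
    by_contra hn
    have h := C.degParity_of_subset hB (i + 1)
    rw [hB₀, add_sub_cancel_right, Set.indicator_of_mem hi, Set.indicator_of_notMem hn] at h
    simp at h
  obtain ⟨e, he⟩ := hne
  obtain ⟨i₀, rfl⟩ := hB he
  have hall : ∀ k : ℕ, s(C.f (i₀ + k), C.f (i₀ + k + 1)) ∈ B := by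
    intro k
    induction k with
    | zero => simpa using he
    | succ k ih => simpa [add_assoc] using hstep _ ih
  refine hB.antisymm ?_
  rintro _ ⟨j, rfl⟩
  simpa using hall (j - i₀).val

end GridCycle

def boundary (S : Set GridV) : Set (Sym2 GridV) :=
  {e | ∃ a b, IsSharedEdge e a b ∧ ¬(a ∈ S ↔ b ∈ S)}

namespace IsSharedEdge

variable {S : Set GridV} {e : Sym2 GridV} {a b : GridV}

lemma mem_boundary_iff (h : IsSharedEdge e a b) : e ∈ boundary S ↔ ¬(a ∈ S ↔ b ∈ S) := by
  refine ⟨?_, fun hab => ⟨a, b, h, hab⟩⟩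
  rintro ⟨c, d, hcd, hS⟩
  obtain ⟨rfl, rfl⟩ := h.unique hcd
  exact hS

lemma indicator_boundary (h : IsSharedEdge e a b) :
    (boundary S).indicator (1 : Sym2 GridV → ZMod 2) e = S.indicator 1 a + S.indicator 1 b := by
  by_cases ha : a ∈ S <;> by_cases hb : b ∈ S <;>
    simp [Set.indicator, h.mem_boundary_iff, ha, hb]
  decide

end IsSharedEdge

lemma degParity_boundary (S : Set GridV) (v : GridV) : degParity (boundary S) v = 0 := by
  have h : degParity (boundary S) v = (boundary S).indicator 1 s(v, v + (1, 0)) +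
      (boundary S).indicator 1 s(v, v + (-1, 0)) + (boundary S).indicator 1 s(v, v + (0, 1)) +
      (boundary S).indicator 1 s(v, v + (0, -1)) := by
    simp [degParity, unitSteps, Finset.sum_insert, add_assoc]
  rw [h, (isSharedEdge_right v).indicator_boundary, (isSharedEdge_left v).indicator_boundary,
    (isSharedEdge_up v).indicator_boundary, (isSharedEdge_down v).indicator_boundary]
  generalize S.indicator (1 : GridV → ZMod 2) v = x₁,
    S.indicator (1 : GridV → ZMod 2) (v - (1, 0)) = x₂,
    S.indicator (1 : GridV → ZMod 2) (v - (1, 1)) = x₃,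
    S.indicator (1 : GridV → ZMod 2) (v - (0, 1)) = x₄
  revert x₁ x₂ x₃ x₄
  decide

lemma boundary_nonempty {S : Set GridV} (hfin : S.Finite) (hne : S.Nonempty) :
    (boundary S).Nonempty := by
  obtain ⟨z, hz, hmax⟩ := hfin.exists_maximalFor Prod.snd S hne
  have hup : z + (0, 1) ∉ S := fun h => by
    have := hmax h
    simp at this
  exact ⟨_, z, _, Or.inl ⟨rfl, rfl⟩, fun h => hup (h.1 hz)⟩

lemma GridCycle.boundary_eq_edgeSet (C : GridCycle) {S : Set GridV} (hfin : S.Finite)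
    (hne : S.Nonempty) (hS : boundary S ⊆ C.edgeSet) : boundary S = C.edgeSet :=
  C.eq_edgeSet_of_degParity_eq_zero hS (degParity_boundary S) (boundary_nonempty hfin hne)

lemma finite_squareCenter_preimage {K : Set (ℝ × ℝ)} (hK : Bornology.IsBounded K) :
    (squareCenter ⁻¹' K).Finite := by
  have h : Filter.Tendsto squareCenter Filter.cofinite (Filter.cocompact (ℝ × ℝ)) := by
    rw [← Filter.coprod_cofinite, ← Filter.coprod_cocompact]
    exact Int.tendsto_coe_cofinite.prodMap_coprod Int.tendsto_coe_cofinite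
  have hfin := Filter.eventually_cofinite.1 <|
    h.eventually hK.isCompact_closure.compl_mem_cocompact
  exact hfin.subset fun z hz => not_not.2 (subset_closure hz)

lemma mem_connectedComponentIn_iff_of_isPreconnected {X : Type*} [TopologicalSpace X]
    {s F : Set X} {x y p : X} (hs : IsPreconnected s) (hsF : s ⊆ F) (hx : x ∈ s) (hy : y ∈ s) :
    x ∈ connectedComponentIn F p ↔ y ∈ connectedComponentIn F p := by
  suffices ∀ x ∈ s, ∀ y ∈ s, x ∈ connectedComponentIn F p → y ∈ connectedComponentIn F p from
    ⟨this x hx y hy, this y hy x hx⟩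
  intro x hx y hy hxp
  rw [connectedComponentIn_eq hxp]
  exact hs.subset_connectedComponentIn hx hsF hy

lemma interiorOf_subset_of_carrierOf_subset {D D' : Set (Sym2 GridV)}
    (h : carrierOf D' ⊆ interiorOf D ∪ carrierOf D) :
    interiorOf D' ⊆ interiorOf D ∪ carrierOf D := by
  intro p hp
  by_contra hpD
  set K := connectedComponentIn (carrierOf D)ᶜ p
  have hpK : p ∈ K := mem_connectedComponentIn fun h => hpD (Or.inr h)
  have hK : ¬ Bornology.IsBounded K := fun hK => hpD (Or.inl ⟨fun h => hpD (Or.inr h), hK⟩)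
  have hKD' : K ⊆ (carrierOf D')ᶜ := by
    intro q hqK hqD'
    rcases h hqD' with hq | hq
    · exact hK (by rw [show K = _ from connectedComponentIn_eq hqK]; exact hq.2)
    · exact connectedComponentIn_subset _ _ hqK hq
  exact hK <| hp.2.subset <|
    isPreconnected_connectedComponentIn.subset_connectedComponentIn hpK hKD'

lemma IsSharedEdge.segment_subset_interiorOf {E : Set (Sym2 GridV)} {e : Sym2 GridV}
    {a b : GridV} (hE : IsGridEdgeSet E) (h : IsSharedEdge e a b) (he : e ∉ E)
    (hin : inInterior E (edgeSeg e)) :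
    segment ℝ (squareCenter a) (squareCenter b) ⊆ interiorOf E := by
  have hseg := h.segment_subset_compl_carrierOf hE he
  obtain ⟨hm, hme⟩ := h.midpoint_mem_segment_inter_edgeSeg
  have hmE : midpoint ℝ (squareCenter a) (squareCenter b) ∈ interiorOf E :=
    (hin hme).resolve_right (hseg hm)
  have hK := (convex_segment _ _).isPreconnected.subset_connectedComponentIn hm hseg
  intro q hq
  exact ⟨hseg hq, connectedComponentIn_eq (hK hq) ▸ hmE.2⟩

lemma GridCycle.squareCenter_notMem_interiorOf (C : GridCycle) {e : Sym2 GridV} {a b : GridV}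
    (he : e ∈ C.edgeSet) (h : IsSharedEdge e a b) (ha : squareCenter a ∈ interiorOf C.edgeSet) :
    squareCenter b ∉ interiorOf C.edgeSet := by
  intro hb
  set F := (carrierOf C.edgeSet)ᶜ
  set S := squareCenter ⁻¹' (connectedComponentIn F (squareCenter a) ∪
    connectedComponentIn F (squareCenter b))
  have haS : a ∈ S := Or.inl (mem_connectedComponentIn ha.1)
  have hbS : b ∈ S := Or.inr (mem_connectedComponentIn hb.1)
  have hS : boundary S ⊆ C.edgeSet := by
    rintro f ⟨z, w, hzw, hS⟩
    by_contra hf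
    have hseg := hzw.segment_subset_compl_carrierOf C.isGridEdgeSet hf
    have hiff := fun p => mem_connectedComponentIn_iff_of_isPreconnected (p := p)
      (convex_segment _ _).isPreconnected hseg (left_mem_segment ℝ _ _) (right_mem_segment ℝ _ _)
    exact hS (or_congr (hiff _) (hiff _))
  have hbd := C.boundary_eq_edgeSet (finite_squareCenter_preimage (ha.2.union hb.2)) ⟨a, haS⟩ hS
  exact (h.mem_boundary_iff.1 (hbd ▸ he)) (iff_of_true haS hbS)

lemma subset_of_forall_mem_or_inInterior {D D' : Set (Sym2 GridV)} (hD : IsCycle D)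
    (hD' : IsCycle D') (h : ∀ e ∈ D', e ∈ D ∨ inInterior D (edgeSeg e))
    (h' : ∀ e ∈ D, e ∈ D' ∨ inInterior D' (edgeSeg e)) : D ⊆ D' := by
  obtain ⟨C, rfl⟩ := hD
  obtain ⟨C', rfl⟩ := hD'
  intro e he
  by_contra he'
  obtain ⟨a, b, hab⟩ := C.isGridEdgeSet e he
  have hseg :=
    hab.segment_subset_interiorOf C'.isGridEdgeSet he' ((h' e he).resolve_left he')
  have hcar : carrierOf C'.edgeSet ⊆ interiorOf C.edgeSet ∪ carrierOf C.edgeSet := by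
    intro q hq
    obtain ⟨f, hf, hqf⟩ := mem_carrierOf.1 hq
    exact (h f hf).elim (fun hfC => Or.inr (mem_carrierOf.2 ⟨f, hfC, hqf⟩)) (· hqf)
  have hin : ∀ z, squareCenter z ∈ interiorOf C'.edgeSet → squareCenter z ∈ interiorOf C.edgeSet :=
    fun z hz => (interiorOf_subset_of_carrierOf_subset hcar hz).resolve_right
      (squareCenter_notMem_carrierOf C.isGridEdgeSet z)
  exact C.squareCenter_notMem_interiorOf he hab (hin a (hseg (left_mem_segment ℝ _ _)))
    (hin b (hseg (right_mem_segment ℝ _ _)))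

theorem merged_cycle_unique_general (C₁ C₂ D D' : Set (Sym2 GridV))
    (hD : IsCycle D) (hDsub : D ⊆ C₁ ∪ C₂)
    (hDcov : ∀ e ∈ C₁ ∪ C₂, e ∈ D ∨ inInterior D (edgeSeg e))
    (hD' : IsCycle D') (hD'sub : D' ⊆ C₁ ∪ C₂)
    (hD'cov : ∀ e ∈ C₁ ∪ C₂, e ∈ D' ∨ inInterior D' (edgeSeg e)) :
    D = D' := by
  have h : ∀ e ∈ D', e ∈ D ∨ inInterior D (edgeSeg e) := fun e he => hDcov e (hD'sub he)
  have h' : ∀ e ∈ D, e ∈ D' ∨ inInterior D' (edgeSeg e) := fun e he => hD'cov e (hDsub he)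
  exact (subset_of_forall_mem_or_inInterior hD hD' h h').antisymm
    (subset_of_forall_mem_or_inInterior hD' hD h' h)

/-- Let `C₁, C₂` be cycles of the full grid graph. If `D` and `D'` are
cycles consisting only of edges of `C₁` and `C₂` such that every edge of `C₁` and of
`C₂` belongs to `D` or is contained in the interior of `D`, and likewise for `D'`, then
`D = D'`. -/
theorem merged_cycle_unique (C₁ C₂ D D' : Set (Sym2 GridV))
    (h₁ : IsCycle C₁) (h₂ : IsCycle C₂)
    (hD : IsCycle D) (hDsub : D ⊆ C₁ ∪ C₂)
    (hDcov : ∀ e ∈ C₁ ∪ C₂, e ∈ D ∨ inInterior D (edgeSeg e))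
    (hD' : IsCycle D') (hD'sub : D' ⊆ C₁ ∪ C₂)
    (hD'cov : ∀ e ∈ C₁ ∪ C₂, e ∈ D' ∨ inInterior D' (edgeSeg e)) :
    D = D' :=
  merged_cycle_unique_general C₁ C₂ D D' hD hDsub hDcov hD' hD'sub hD'cov
end

section
/- Suppose the star-connected occupied component C(0) containing the origin is finite and nonempty, let E_1, …, E_n be the distinct outermost boundary cycles of C(0), and let H_cyc be the graph on {1, …, n} in which i and j are adjacent iff E_i and E_j share a corner. If (i_1, i_2, …, i_m) is a path in H_cyc, then any vertex of E_{i_1} and any vertex of E_{i_m} are joined by a path in G_C consisting only of edges of the cycles E_{i_1}, E_{i_2}, …, E_{i_m}. -/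
/-!
Each outermost boundary cycle is connected, and consecutive cycles along the path in `H_cyc`
share a corner, so `u` and `v` are reachable in the graph spanned by the edges of these
cycles; a walk of minimal length between them is a path.
-/

open SimpleGraph

theorem SimpleGraph.Reachable.exists_nodup_isChain_adj {V : Type*} {G : SimpleGraph V} {u v : V}
    (h : G.Reachable u v) :
    ∃ p : List V, p.Nodup ∧ p.head? = some u ∧ p.getLast? = some v ∧ p.IsChain G.Adj := by
  obtain ⟨w, hw⟩ := h.exists_isPath
  refine ⟨w.support, hw.support_nodup, ?_, ?_, w.isChain_adj_support⟩
  · rw [← w.cons_tail_support]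
    rfl
  · rw [List.getLast?_eq_some_getLast w.support_ne_nil, w.getLast_support]

theorem SimpleGraph.reachable_of_isChain_inter_nonempty {V ι : Type*} {G : SimpleGraph V}
    {A : ι → Set V} {i : ι} {l : List ι}
    (hA : ∀ j ∈ i :: l, ∀ u ∈ A j, ∀ v ∈ A j, G.Reachable u v)
    (hl : (i :: l).IsChain fun a b => (A a ∩ A b).Nonempty)
    {u v : V} (hu : u ∈ A i) (hv : v ∈ A ((i :: l).getLast (List.cons_ne_nil i l))) :
    G.Reachable u v := by
  induction l generalizing i u with
  | nil => exact hA i List.mem_cons_self u hu v hv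
  | cons j l ih =>
    obtain ⟨⟨w, hwi, hwj⟩, hl⟩ := List.isChain_cons_cons.mp hl
    have hA' : ∀ k ∈ j :: l, ∀ u ∈ A k, ∀ v ∈ A k, G.Reachable u v :=
      fun k hk => hA k (List.mem_cons_of_mem i hk)
    exact (hA i List.mem_cons_self u hu w hwi).trans (ih hA' hl hwj hv)

theorem GridCycle.reachable_apply (C : GridCycle) (i j : ZMod C.n) :
    (fromEdgeSet C.edgeSet).Reachable (C.f i) (C.f j) := by
  have hstep : ∀ k : ZMod C.n, (fromEdgeSet C.edgeSet).Adj (C.f k) (C.f (k + 1)) := by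
    refine fun k => (fromEdgeSet_adj _).2 ⟨⟨k, rfl⟩, fun heq => ?_⟩
    simpa [GridAdj, heq] using C.adj k
  have hfrom : ∀ m : ℕ, (fromEdgeSet C.edgeSet).Reachable (C.f i) (C.f (i + m)) := by
    intro m
    induction m with
    | zero => simp
    | succ m ih => simpa [add_assoc] using ih.trans (hstep _).reachable
  have : NeZero C.n := ⟨by have := C.hn; omega⟩
  simpa using hfrom (j - i).val

theorem IsCycle.reachable {S : Set (Sym2 GridV)} (hS : IsCycle S) {u v : GridV}
    (hu : u ∈ vertexSetOf S) (hv : v ∈ vertexSetOf S) : (fromEdgeSet S).Reachable u v := by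
  obtain ⟨C, rfl⟩ := hS
  have hvert : ∀ w ∈ vertexSetOf C.edgeSet, ∃ i, C.f i = w := by
    rintro w ⟨_, ⟨i, rfl⟩, hw⟩
    rcases Sym2.mem_iff.mp hw with rfl | rfl
    exacts [⟨i, rfl⟩, ⟨i + 1, rfl⟩]
  obtain ⟨i, rfl⟩ := hvert u hu
  obtain ⟨j, rfl⟩ := hvert v hv
  exact C.reachable_apply i j

theorem path_along_cycle_graph_general (ω : GridV → Prop)
    (n : ℕ) (E : Fin n → Set (Sym2 GridV))
    (hall : ∀ i, ∃ z ∈ starComp ω, isOutermostCycleOf ω z (E i))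
    (l : List (Fin n))
    (hlchain : List.Chain' (fun i j =>
      (SimpleGraph.fromRel fun a b =>
        (vertexSetOf (E a) ∩ vertexSetOf (E b)).Nonempty).Adj i j) l)
    (i₁ iₘ : Fin n) (hhead : l.head? = some i₁) (hlast : l.getLast? = some iₘ)
    (u v : GridV) (hu : u ∈ vertexSetOf (E i₁)) (hv : v ∈ vertexSetOf (E iₘ)) :
    ∃ p : List GridV, p.Nodup ∧ p.head? = some u ∧ p.getLast? = some v ∧
      List.Chain' (fun a b => ∃ i ∈ l, s(a, b) ∈ E i) p := by
  obtain ⟨t, rfl⟩ : ∃ t, l = i₁ :: t := by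
    cases l with
    | nil => simp at hhead
    | cons a t => exact ⟨t, by simpa using hhead⟩
  rw [List.getLast?_eq_some_getLast (List.cons_ne_nil _ _), Option.some_inj] at hlast
  have hshare := hlchain.imp fun a b hab => by
    rcases ((fromRel_adj _ a b).1 hab).2 with h | h
    exacts [h, Set.inter_comm _ _ ▸ h]
  have hcycle_reach : ∀ j ∈ i₁ :: t, ∀ x ∈ vertexSetOf (E j), ∀ y ∈ vertexSetOf (E j),
      (fromEdgeSet {e | ∃ i ∈ i₁ :: t, e ∈ E i}).Reachable x y :=
    fun j hj _ hx _ hy => ((hall j).choose_spec.2.1.1.reachable hx hy).mono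
      (fromEdgeSet_mono fun _ he => ⟨j, hj, he⟩)
  have hreach := reachable_of_isChain_inter_nonempty hcycle_reach hshare hu (hlast ▸ hv)
  obtain ⟨p, hnodup, hp_head, hp_last, hp_chain⟩ := hreach.exists_nodup_isChain_adj
  exact ⟨p, hnodup, hp_head, hp_last, hp_chain.imp fun _ _ hab => ((fromEdgeSet_adj _).1 hab).1⟩

/-- Suppose `C(0)` is finite and nonempty, `E₁, …, Eₙ` enumerate the
distinct outermost boundary cycles of `C(0)`, and `H_cyc` is the graph on `{1, …, n}` in
which `i, j` are adjacent iff `E i` and `E j` share a corner. If `(i₁, …, i_m)` is a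
path in `H_cyc`, then any vertex of `E i₁` and any vertex of `E i_m` are joined by a
path of `G_C` using only edges of the cycles `E i₁, …, E i_m`. -/
theorem path_along_cycle_graph (ω : GridV → Prop)
    (hfin : (starComp ω).Finite) (hne : (starComp ω).Nonempty)
    (n : ℕ) (E : Fin n → Set (Sym2 GridV)) (hinj : Function.Injective E)
    (hall : ∀ i, ∃ z ∈ starComp ω, isOutermostCycleOf ω z (E i))
    (hcover : ∀ z ∈ starComp ω, ∀ D, isOutermostCycleOf ω z D → ∃ i, E i = D)
    (l : List (Fin n)) (hlnd : l.Nodup)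
    (hlchain : List.Chain' (fun i j =>
      (SimpleGraph.fromRel fun a b =>
        (vertexSetOf (E a) ∩ vertexSetOf (E b)).Nonempty).Adj i j) l)
    (i₁ iₘ : Fin n) (hhead : l.head? = some i₁) (hlast : l.getLast? = some iₘ)
    (u v : GridV) (hu : u ∈ vertexSetOf (E i₁)) (hv : v ∈ vertexSetOf (E iₘ)) :
    ∃ p : List GridV, p.Nodup ∧ p.head? = some u ∧ p.getLast? = some v ∧
      List.Chain' (fun a b => ∃ i ∈ l, s(a, b) ∈ E i) p :=
  path_along_cycle_graph_general ω n E hall l hlchain i₁ iₘ hhead hlast u v hu hv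
end
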